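/- arXiv:2002.06741 — 2 statements merged into one kernel-verified Lean document; each statement's English description precedes it below -/
import Mathlib

section
/- Let $m, n, r$ be positive integers with $\gcd(m,n)=1$. Then $n$ divides $\binom{nr+m-1}{m}$, i.e. $\frac{1}{n}\binom{nr+m-1}{m}$ is a positive integer. -/
/-- For positive integers `m n r` with `gcd m n = 1`,
`n` divides the binomial coefficient `(n*r + m - 1).choose m`, i.e.
the rational Catalan number `(1/n) * C(nr+m-1, m)` is a (positive) integer. -/
theorem rank_r_rational_catalan_integral (m n r : ℕ) (hm : 0 < m) (hn : 0 < n) (hr : 0 < r)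
    (h : Nat.gcd m n = 1) : n ∣ (n * r + m - 1).choose m := by
  have hco : Nat.Coprime n m := (Nat.coprime_iff_gcd_eq_one.mpr h).symm
  refine hco.dvd_of_dvd_mul_left ?_
  -- key identity: C(N, m) * m = C(N, m-1) * (N - (m-1)) with N = n*r+m-1
  have key := Nat.choose_succ_right_eq (n * r + m - 1) (m - 1)
  have hm1 : m - 1 + 1 = m := Nat.succ_pred_eq_of_pos hm
  have hsub : n * r + m - 1 - (m - 1) = n * r := by omega
  rw [hm1, hsub] at key
  -- key : (n*r+m-1).choose m * m = (n*r+m-1).choose (m-1) * (n*r)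
  refine ⟨r * (n * r + m - 1).choose (m - 1), ?_⟩
  calc m * (n * r + m - 1).choose m = (n * r + m - 1).choose m * m := by ring
    _ = (n * r + m - 1).choose (m - 1) * (n * r) := key
    _ = n * (r * (n * r + m - 1).choose (m - 1)) := by ring
end

section
/- Let $m, n$ be coprime positive integers and $r \geq 1$. The number of rank $r$ semistandard $\frac{m}{n}$-parking functions equals $\frac{1}{n}\binom{nr+m-1}{m}$. Here, given an $\frac{m}{n}$-Dyck path $D$ with vertical runs of lengths $a_1, \ldots, a_\ell$ (so $a_1 + \cdots + a_\ell = m$), the number of labelings $\varphi$ making $(D,\varphi)$ a rank $r$ semistandard parking function is $\prod_{i=1}^{\ell}\binom{r+a_i-1}{a_i}$; hence equivalently $\sum_{D \in \mathcal{D}_{m/n}} \prod_{i=1}^{\ell(D)}\binom{r+a_i(D)-1}{a_i(D)} = \frac{1}{n}\binom{nr+m-1}{m}$. -/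
open Finset
open Fin.NatCast


lemma mc_conv (b : ℕ) : ∀ (a M : ℕ),
    ∑ ij ∈ Finset.HasAntidiagonal.antidiagonal M, Nat.multichoose a ij.1 * Nat.multichoose b ij.2
      = Nat.multichoose (a + b) M := by
  intro a
  induction a with
  | zero =>
    intro M
    rw [Nat.zero_add]
    induction M with
    | zero => simp
    | succ M ih =>
      rw [Finset.Nat.antidiagonal_succ, Finset.sum_cons, Finset.sum_map]
      simp [Nat.multichoose_zero_succ, Nat.multichoose_zero_right]
  | succ a iha =>
    intro M
    induction M with
    | zero => simp
    | succ M ihM =>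
      rw [Finset.Nat.antidiagonal_succ, Finset.sum_cons, Finset.sum_map]
      simp only [Function.Embedding.coe_prodMap, Function.Embedding.coeFn_mk,
        Function.Embedding.refl_apply, Prod.map_fst, Prod.map_snd, Prod.map_apply]
      have key : ∀ ij : ℕ × ℕ,
          Nat.multichoose (a+1) (ij.1 + 1) * Nat.multichoose b ij.2
            = Nat.multichoose a (ij.1 + 1) * Nat.multichoose b ij.2
              + Nat.multichoose (a+1) ij.1 * Nat.multichoose b ij.2 := by
        intro ij
        rw [Nat.multichoose_succ_succ, Nat.add_mul]
      rw [Finset.sum_congr rfl (fun ij _ => key ij), Finset.sum_add_distrib]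
      have h1 : Nat.multichoose (a+1) 0 * Nat.multichoose b (M+1)
            + ∑ ij ∈ Finset.HasAntidiagonal.antidiagonal M, Nat.multichoose a (ij.1 + 1) * Nat.multichoose b ij.2
          = Nat.multichoose (a + b) (M + 1) := by
        rw [← iha (M+1), Finset.Nat.antidiagonal_succ, Finset.sum_cons, Finset.sum_map]
        simp [Nat.multichoose_zero_right]
      rw [ihM]
      have e : a + 1 + b = a + b + 1 := by omega
      rw [e]
      rw [Nat.multichoose_succ_succ (a+b) M]
      omega


lemma sum_piAntidiag_mc {ι : Type*} [DecidableEq ι] (r : ℕ) (s : Finset ι) :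
    ∀ M : ℕ, ∑ f ∈ s.piAntidiag M, ∏ i ∈ s, Nat.multichoose r (f i)
      = Nat.multichoose (s.card * r) M := by
  induction s using Finset.cons_induction with
  | empty =>
    intro M
    rw [Finset.piAntidiag_empty]
    cases M with
    | zero => simp
    | succ M => simp [Nat.multichoose_zero_succ]
  | cons i s hi ih =>
    intro M
    rw [Finset.piAntidiag_cons, Finset.sum_disjiUnion]
    have key : ∀ p ∈ Finset.HasAntidiagonal.antidiagonal M,
        ∑ f ∈ (Finset.piAntidiag s p.2).map
            (addRightEmbedding fun t ↦ if t = i then p.1 else 0),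
          ∏ j ∈ Finset.cons i s hi, Nat.multichoose r (f j)
        = Nat.multichoose r p.1 * Nat.multichoose (s.card * r) p.2 := by
      intro p _
      rw [Finset.sum_map, ← ih p.2]
      rw [Finset.mul_sum]
      apply Finset.sum_congr rfl
      intro g hg
      have hg0 : g i = 0 := by
        rw [Finset.mem_piAntidiag] at hg
        by_contra h
        exact hi (hg.2 i h)
      rw [Finset.prod_cons]
      simp only [addRightEmbedding_apply]
      congr 1
      · simp [hg0]
      · apply Finset.prod_congr rfl
        intro j hj
        have : j ≠ i := fun h => hi (h ▸ hj)
        simp [this]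
    rw [Finset.sum_congr rfl key, mc_conv, Finset.card_cons, Nat.add_mul, Nat.one_mul,
      Nat.add_comm (s.card * r) r]


private lemma mod_helper1 {N k : ℕ} (hk : k < N) : (k + (N - k) % N) % N = 0 % N := by
  rcases Nat.eq_zero_or_pos k with rfl | hk0
  · simp
  · have h1 : (N - k) % N = N - k := Nat.mod_eq_of_lt (by omega)
    rw [h1]
    have h2 : k + (N - k) = N := by omega
    rw [h2, Nat.mod_self, Nat.zero_mod]

private lemma mod_helper2 {N k : ℕ} (hk : k < N) : (N - (N - k) % N) % N = k := by
  rcases Nat.eq_zero_or_pos k with rfl | hk0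
  · simp [Nat.mod_self]
  · have h1 : (N - k) % N = N - k := Nat.mod_eq_of_lt (by omega)
    rw [h1]
    have h2 : N - (N - k) = k := by omega
    rw [h2, Nat.mod_eq_of_lt hk]


section Cycle

variable {n : ℕ} [NeZero n]

private lemma npos : 0 < n := Nat.pos_of_ne_zero (NeZero.ne n)

lemma natCast_fin_mod (k : ℕ) : ((k % n : ℕ) : Fin n) = (k : Fin n) := by
  apply Fin.ext
  simp [Fin.val_natCast, Nat.mod_mod_of_dvd]

/-- read `b` cyclically starting at position `k` -/
def rotc (k : ℕ) (b : Fin n → ℕ) : Fin n → ℕ := fun j => b ((k : Fin n) + j)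

lemma rotc_rotc (k l : ℕ) (b : Fin n → ℕ) : rotc k (rotc l b) = rotc (l + k) b := by
  funext j
  simp only [rotc, Nat.cast_add]
  rw [add_assoc]

lemma rotc_zero (b : Fin n → ℕ) : rotc 0 b = b := by
  funext j; simp [rotc]

lemma rotc_congr {k k' : ℕ} (h : k % n = k' % n) (b : Fin n → ℕ) : rotc k b = rotc k' b := by
  funext j
  simp only [rotc]
  rw [← natCast_fin_mod k, h, natCast_fin_mod]

lemma sum_rotc (k : ℕ) (b : Fin n → ℕ) : ∑ j, rotc k b j = ∑ j, b j :=
  Fintype.sum_equiv (Equiv.addLeft (k : Fin n)) _ _ (fun j => rfl)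

lemma prod_rotc (f : ℕ → ℕ) (k : ℕ) (b : Fin n → ℕ) :
    ∏ j, f (rotc k b j) = ∏ j, f (b j) :=
  Fintype.prod_equiv (Equiv.addLeft (k : Fin n)) _ _ (fun j => rfl)

/-- partial sums of the cyclic extension of `b` -/
def psum (b : Fin n → ℕ) (t : ℕ) : ℕ := ∑ i ∈ Finset.range t, b (i : Fin n)

lemma psum_univ (b : Fin n → ℕ) : psum b n = ∑ j, b j := by
  rw [psum, ← Fin.sum_univ_eq_sum_range (fun i => b (i : Fin n)) n]
  exact Fintype.sum_congr _ _ (fun j => by rw [Fin.cast_val_eq_self])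

lemma psum_add (b : Fin n → ℕ) (k t : ℕ) :
    psum b (k + t) = psum b k + psum (rotc k b) t := by
  induction t with
  | zero => simp [psum]
  | succ t ih =>
    rw [← Nat.add_assoc, psum, Finset.sum_range_succ, ← psum, ih]
    have h2 : psum (rotc k b) (t + 1) = psum (rotc k b) t + rotc k b (t : Fin n) := by
      rw [psum, Finset.sum_range_succ, ← psum]
    rw [h2]
    simp only [rotc, Nat.cast_add]
    omega

variable (m : ℕ)

/-- the "area" function -/
def gfun (b : Fin n → ℕ) (t : ℕ) : ℤ := (n : ℤ) * psum b t - m * t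

variable {b : Fin n → ℕ} (hb : ∑ j, b j = m)
include hb

lemma gfun_period (t : ℕ) : gfun m b (t + n) = gfun m b t := by
  have h1 : psum b (t + n) = psum b t + m := by
    rw [psum_add, psum_univ, sum_rotc, hb]
  simp only [gfun, h1]
  push_cast
  ring

lemma gfun_mod (t : ℕ) : gfun m b t = gfun m b (t % n) := by
  have key : ∀ q s, gfun m b (s + n * q) = gfun m b s := by
    intro q
    induction q with
    | zero => intro s; simp
    | succ q ih =>
      intro s
      have : s + n * (q + 1) = (s + n * q) + n := by ring
      rw [this, gfun_period m hb, ih]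
  conv_lhs => rw [← Nat.mod_add_div t n, key]


lemma gfun_inj (hcop : Nat.gcd m n = 1) {s t : ℕ}
    (h : gfun m b s = gfun m b t) : s % n = t % n := by
  have hd : (n : ℤ) ∣ (m : ℤ) * ((s : ℤ) - t) := by
    simp only [gfun] at h
    refine ⟨(psum b s : ℤ) - psum b t, ?_⟩
    push_cast
    linarith
  have hco : IsCoprime (n : ℤ) (m : ℤ) := by
    rw [Int.isCoprime_iff_gcd_eq_one, Int.gcd_natCast_natCast, Nat.gcd_comm, hcop]
  have hd2 : (n : ℤ) ∣ (s : ℤ) - t := hco.dvd_of_dvd_mul_left hd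
  have h3 : (s : ℤ) % n = (t : ℤ) % n := Int.ModEq.symm (Int.modEq_iff_dvd.mpr hd2)
  have h4 : ((s % n : ℕ) : ℤ) = ((t % n : ℕ) : ℤ) := by
    rw [Int.natCast_mod, Int.natCast_mod]; exact h3
  exact_mod_cast h4

omit hb

/-- the Dyck condition on `b : Fin n → ℕ` -/
def IsDyck (b : Fin n → ℕ) : Prop :=
  ∀ j : Fin n, m * ((j : ℕ) + 1) ≤
    n * ∑ t ∈ Finset.univ.filter (fun t : Fin n => (t : ℕ) ≤ (j : ℕ)), b t

instance isDyck_decidable (m : ℕ) : DecidablePred (IsDyck (n := n) m) := fun b => by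
  unfold IsDyck; infer_instance

lemma filter_sum_eq (b : Fin n → ℕ) {J : ℕ} (hJ : J < n) :
    ∑ t ∈ Finset.univ.filter (fun t : Fin n => (t : ℕ) ≤ J), b t = psum b (J + 1) := by
  rw [psum]
  apply Finset.sum_nbij' (i := fun (t : Fin n) => (t : ℕ)) (j := fun (i : ℕ) => (i : Fin n))
  · intro a ha
    simp only [Finset.mem_filter] at ha
    simp only [Finset.mem_range]
    omega
  · intro a ha
    simp only [Finset.mem_range] at ha
    simp only [Finset.mem_filter, Finset.mem_univ, true_and, Fin.val_natCast]
    have : a % n = a := Nat.mod_eq_of_lt (by omega)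
    omega
  · intro a _; exact Fin.cast_val_eq_self a
  · intro a ha
    simp only [Finset.mem_range] at ha
    simp only [Fin.val_natCast]
    exact Nat.mod_eq_of_lt (by omega)
  · intro a _
    rw [Fin.cast_val_eq_self]

include hb

lemma isDyck_rotc_iff (k : ℕ) :
    IsDyck m (rotc k b) ↔ ∀ t, 1 ≤ t → t ≤ n → gfun m b k ≤ gfun m b (k + t) := by
  have key : ∀ t : ℕ, gfun m b (k + t) = gfun m b k + ((n : ℤ) * psum (rotc k b) t - m * t) := by
    intro t
    simp only [gfun, psum_add b k t]
    push_cast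
    ring
  constructor
  · intro h t ht1 htn
    have hj : t - 1 < n := by omega
    have := h ⟨t - 1, hj⟩
    rw [filter_sum_eq (rotc k b) hj] at this
    have ht' : t - 1 + 1 = t := by omega
    rw [ht'] at this
    rw [key t]
    have : (m : ℤ) * t ≤ (n : ℤ) * psum (rotc k b) t := by exact_mod_cast this
    linarith
  · intro h j
    rw [filter_sum_eq (rotc k b) j.isLt]
    have := h ((j : ℕ) + 1) (by omega) (by omega)
    rw [key ((j : ℕ) + 1)] at this
    push_cast at this
    have h2 : (m : ℤ) * ((j : ℕ) + 1) ≤ (n : ℤ) * psum (rotc k b) ((j : ℕ) + 1) := by linarith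
    exact_mod_cast h2

lemma existsUnique_rotc (hcop : Nat.gcd m n = 1) :
    ∃! k, k ∈ Finset.range n ∧ IsDyck m (rotc k b) := by
  have hn : 0 < n := Nat.pos_of_ne_zero (NeZero.ne n)
  obtain ⟨k0, hk0, hmin⟩ := Finset.exists_min_image (Finset.range n) (gfun m b)
    ⟨0, Finset.mem_range.mpr hn⟩
  have hminall : ∀ s, gfun m b k0 ≤ gfun m b s := by
    intro s
    rw [gfun_mod m hb s]
    exact hmin _ (Finset.mem_range.mpr (Nat.mod_lt _ hn))
  have hle : ∀ k k', k ∈ Finset.range n → IsDyck m (rotc k b) →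
      gfun m b k ≤ gfun m b k' := by
    intro k k' hk hdk
    rcases eq_or_ne (k' % n) (k % n) with he | he
    · rw [gfun_mod m hb k', he, ← gfun_mod m hb k]
    · have hn : 0 < n := Nat.pos_of_ne_zero (NeZero.ne n)
      have he2 : k' % n < n := Nat.mod_lt _ hn
      have hkn : k < n := Finset.mem_range.mp hk
      have hk' : k % n = k := Nat.mod_eq_of_lt hkn
      have hne : k' % n ≠ k := by rw [← hk']; exact he
      set t : ℕ := if k < k' % n then k' % n - k else k' % n + n - k with hts
      have h1 : 1 ≤ t := by rw [hts]; split <;> omega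
      have h2 : t ≤ n := by rw [hts]; split <;> omega
      have h4 : k + t = k' % n ∨ k + t = k' % n + n := by rw [hts]; split <;> omega
      have h3 : (k + t) % n = k' % n := by
        rcases h4 with h4 | h4 <;> rw [h4]
        · exact Nat.mod_eq_of_lt he2
        · rw [Nat.add_mod_right]; exact Nat.mod_eq_of_lt he2
      have := (isDyck_rotc_iff m hb k).mp hdk t h1 h2
      calc gfun m b k ≤ gfun m b (k + t) := this
        _ = gfun m b k' := by rw [gfun_mod m hb (k + t), h3, ← gfun_mod m hb k']
  refine ⟨k0, ⟨hk0, ?_⟩, ?_⟩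
  · rw [isDyck_rotc_iff m hb]
    intro t _ _
    exact hminall _
  · rintro k ⟨hk, hdk⟩
    have h1 : gfun m b k ≤ gfun m b k0 := hle k k0 hk hdk
    have h2 : gfun m b k = gfun m b k0 := le_antisymm h1 (hminall k)
    have := gfun_inj m hb hcop h2
    rw [Nat.mod_eq_of_lt (Finset.mem_range.mp hk),
      Nat.mod_eq_of_lt (Finset.mem_range.mp hk0)] at this
    exact this


omit hb in
lemma cycle_count (hcop : Nat.gcd m n = 1) (f : ℕ → ℕ) :
    n * ∑ b ∈ (Finset.univ.piAntidiag m).filter (IsDyck m),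
        ∏ j : Fin n, f (b j)
      = ∑ b ∈ (Finset.univ : Finset (Fin n)).piAntidiag m, ∏ j : Fin n, f (b j) := by
  classical
  have hn : 0 < n := Nat.pos_of_ne_zero (NeZero.ne n)
  have hmem : ∀ b : Fin n → ℕ, b ∈ (Finset.univ : Finset (Fin n)).piAntidiag m ↔ ∑ j, b j = m := by
    intro b
    rw [Finset.mem_piAntidiag]
    simp
  set k0 : (Fin n → ℕ) → ℕ := fun b =>
    if h : ∃! k, k ∈ Finset.range n ∧ IsDyck m (rotc k b) then h.choose else 0 with hk0def
  have hk0spec : ∀ b : Fin n → ℕ, (∑ j, b j = m) →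
      (k0 b ∈ Finset.range n ∧ IsDyck m (rotc (k0 b) b)) ∧
      (∀ y, y ∈ Finset.range n ∧ IsDyck m (rotc y b) → y = k0 b) := by
    intro b hb
    have h := existsUnique_rotc m hb hcop
    rw [hk0def]
    simp only [dif_pos h]
    exact h.choose_spec
  have hstep : ∑ p ∈ ((Finset.univ.piAntidiag m).filter (IsDyck m)) ×ˢ Finset.range n,
        ∏ j : Fin n, f (p.1 j)
      = ∑ b ∈ (Finset.univ : Finset (Fin n)).piAntidiag m, ∏ j : Fin n, f (b j) := by
    apply Finset.sum_nbij' (i := fun p : (Fin n → ℕ) × ℕ => rotc p.2 p.1)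
      (j := fun b : Fin n → ℕ => (rotc (k0 b) b, (n - k0 b) % n))
    · rintro ⟨d, k⟩ hp
      rw [Finset.mem_product, Finset.mem_filter, hmem] at hp
      rw [hmem]
      rw [sum_rotc]
      exact hp.1.1
    · intro b hb
      rw [hmem] at hb
      obtain ⟨⟨hmem0, hdyck0⟩, _⟩ := hk0spec b hb
      rw [Finset.mem_product, Finset.mem_filter, hmem]
      exact ⟨⟨by rw [sum_rotc]; exact hb, hdyck0⟩, Finset.mem_range.mpr (Nat.mod_lt _ hn)⟩
    · rintro ⟨d, k⟩ hp
      rw [Finset.mem_product, Finset.mem_filter, hmem] at hp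
      obtain ⟨⟨hd, hdyck⟩, hk⟩ := hp
      have hkn : k < n := Finset.mem_range.mp hk
      have hb' : ∑ j, rotc k d j = m := by rw [sum_rotc]; exact hd
      have hback : rotc ((n - k) % n) (rotc k d) = d := by
        rw [rotc_rotc]
        rw [rotc_congr (mod_helper1 hkn), rotc_zero]
      have hku : (n - k) % n = k0 (rotc k d) := by
        apply (hk0spec _ hb').2
        constructor
        · exact Finset.mem_range.mpr (Nat.mod_lt _ hn)
        · rw [hback]; exact hdyck
      have h2 : (n - (n - k) % n) % n = k := mod_helper2 hkn
      rw [Prod.ext_iff]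
      constructor
      · simp only [← hku, hback]
      · simp only [← hku, h2]
    · intro b hb
      rw [hmem] at hb
      obtain ⟨⟨hmem0, _⟩, _⟩ := hk0spec b hb
      have hk0n : k0 b < n := Finset.mem_range.mp hmem0
      simp only
      rw [rotc_rotc]
      rw [rotc_congr (mod_helper1 hk0n), rotc_zero]
    · rintro ⟨d, k⟩ hp
      exact (prod_rotc f k d).symm
  rw [← hstep, Finset.sum_product]
  simp only [Finset.sum_const, Finset.card_range, smul_eq_mul]
  rw [Finset.mul_sum]

end Cycle


/-- for coprime positive integers `m, n` and `r ≥ 1`, the number of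
rank `r` semistandard `m/n`-parking functions equals `(1/n) * C(nr+m-1, m)`.

An `m/n`-Dyck path is encoded by its column profile `c : Fin (n+1) → Fin (m+1)`,
where `c j` is the number of north steps taken in column `x = j`; the path goes
north `c 0` times, then east, north `c 1` times, then east, …  The conditions are
`∑ c j = m` (the path ends at height `m`) and, for each east step `j = 0, …, n-1`,
`n * (height before the east step) ≥ m * (j+1)` (the path stays weakly above the
diagonal `y = (m/n)x`).  The vertical runs of the path are the nonzero `c j`,
and the number of weakly increasing labelings of a run of length `a` by elements of
`{1, …, r}` is `C(r+a-1, a)` (note `C(r-1, 0) = 1`, so columns with `c j = 0`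
contribute trivially to the product). -/
theorem count_semistandard_parking_functions (m n r : ℕ)
    (hm : 0 < m) (hn : 0 < n) (hr : 0 < r) (h : Nat.gcd m n = 1) :
    n * ∑ c ∈ Finset.univ.filter
        (fun c : Fin (n + 1) → Fin (m + 1) =>
          (∑ j : Fin (n + 1), (c j : ℕ)) = m ∧
          ∀ j : Fin n, m * ((j : ℕ) + 1) ≤
            n * ∑ t ∈ Finset.univ.filter (fun t : Fin (n + 1) => (t : ℕ) ≤ (j : ℕ)),
              (c t : ℕ)),
      ∏ j : Fin (n + 1), (r + (c j : ℕ) - 1).choose ((c j : ℕ))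
    = (n * r + m - 1).choose m := by
  haveI : NeZero n := ⟨hn.ne'⟩
  -- partial sum translation
  have L1 : ∀ (c : Fin (n+1) → Fin (m+1)) (J : ℕ), J < n →
      ∑ t ∈ Finset.univ.filter (fun t : Fin (n+1) => (t : ℕ) ≤ J), (c t : ℕ)
      = ∑ t ∈ Finset.univ.filter (fun t : Fin n => (t : ℕ) ≤ J), (c t.castSucc : ℕ) := by
    intro c J hJ
    rw [Finset.sum_filter, Finset.sum_filter, Fin.sum_univ_castSucc]
    have hlast : ¬ ((Fin.last n : ℕ) ≤ J) := by
      rw [Fin.val_last]; omega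
    rw [if_neg hlast, add_zero]
    apply Finset.sum_congr rfl
    intro t _
    rw [Fin.coe_castSucc]
  -- the last column of a Dyck profile is zero
  have L2 : ∀ c : Fin (n+1) → Fin (m+1),
      ((∑ j : Fin (n + 1), (c j : ℕ)) = m ∧
        ∀ j : Fin n, m * ((j : ℕ) + 1) ≤
          n * ∑ t ∈ Finset.univ.filter (fun t : Fin (n+1) => (t : ℕ) ≤ (j : ℕ)), (c t : ℕ)) →
      (c (Fin.last n) : ℕ) = 0 := by
    intro c hc
    have hsum : (∑ t : Fin n, (c t.castSucc : ℕ)) + (c (Fin.last n) : ℕ) = m := by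
      have h0 := hc.1
      rwa [Fin.sum_univ_castSucc (f := fun t : Fin (n+1) => (c t : ℕ))] at h0
    have hj : n - 1 < n := by omega
    have hd := hc.2 ⟨n - 1, hj⟩
    rw [L1 c (n-1) hj] at hd
    have hfull : Finset.univ.filter (fun t : Fin n => (t : ℕ) ≤ ((⟨n-1, hj⟩ : Fin n) : ℕ))
        = Finset.univ := by
      apply Finset.filter_true_of_mem
      intro t _
      have := t.isLt
      simp only
      omega
    rw [hfull] at hd
    have hd2 : m * n ≤ n * ∑ t : Fin n, (c t.castSucc : ℕ) := by
      have : ((⟨n-1, hj⟩ : Fin n) : ℕ) + 1 = n := by simp; omega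
      rw [this] at hd
      exact hd
    have hd3 : m ≤ ∑ t : Fin n, (c t.castSucc : ℕ) := by
      rw [mul_comm] at hd2
      exact Nat.le_of_mul_le_mul_left hd2 hn
    omega
  have key : ∑ c ∈ Finset.univ.filter
        (fun c : Fin (n + 1) → Fin (m + 1) =>
          (∑ j : Fin (n + 1), (c j : ℕ)) = m ∧
          ∀ j : Fin n, m * ((j : ℕ) + 1) ≤
            n * ∑ t ∈ Finset.univ.filter (fun t : Fin (n + 1) => (t : ℕ) ≤ (j : ℕ)),
              (c t : ℕ)),
      ∏ j : Fin (n + 1), (r + (c j : ℕ) - 1).choose ((c j : ℕ))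
      = ∑ b ∈ (Finset.univ.piAntidiag m).filter (IsDyck m),
          ∏ j : Fin n, Nat.multichoose r (b j) := by
    have hmem : ∀ b : Fin n → ℕ,
        b ∈ (Finset.univ : Finset (Fin n)).piAntidiag m ↔ ∑ j, b j = m := by
      intro b; rw [Finset.mem_piAntidiag]; simp
    apply Finset.sum_nbij'
      (i := fun (c : Fin (n+1) → Fin (m+1)) (j : Fin n) => (c j.castSucc : ℕ))
      (j := fun (b : Fin n → ℕ) (t : Fin (n+1)) =>
        if h : (t : ℕ) < n then ((b ⟨(t : ℕ), h⟩ : ℕ) : Fin (m+1)) else 0)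
    · intro c hc
      simp only [Finset.mem_filter, Finset.mem_univ, true_and] at hc
      rw [Finset.mem_filter, hmem]
      constructor
      · have hsum : (∑ t : Fin n, (c t.castSucc : ℕ)) + (c (Fin.last n) : ℕ) = m := by
          have h0 := hc.1
          rwa [Fin.sum_univ_castSucc (f := fun t : Fin (n+1) => (c t : ℕ))] at h0
        have := L2 c hc
        omega
      · intro j
        have := hc.2 j
        rwa [L1 c (j : ℕ) j.isLt] at this
    · intro b hb
      rw [Finset.mem_filter, hmem] at hb
      obtain ⟨hbsum, hbdyck⟩ := hb
      have hble : ∀ t : Fin n, b t ≤ m := by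
        intro t
        rw [← hbsum]
        exact Finset.single_le_sum (fun i _ => Nat.zero_le _) (Finset.mem_univ t)
      have hpt : ∀ t : Fin n,
          Fin.val (if h' : ((t.castSucc : Fin (n+1)) : ℕ) < n
              then ((b ⟨((t.castSucc : Fin (n+1)) : ℕ), h'⟩ : ℕ) : Fin (m+1)) else 0)
            = b t := by
        intro t
        have ht : ((t.castSucc : Fin (n+1)) : ℕ) < n := by
          rw [Fin.coe_castSucc]; exact t.isLt
        rw [dif_pos ht, Fin.val_natCast]
        have h1 : (⟨((t.castSucc : Fin (n+1)) : ℕ), ht⟩ : Fin n) = t := by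
          apply Fin.ext; rw [Fin.coe_castSucc]
        rw [h1]
        exact Nat.mod_eq_of_lt (by have := hble t; omega)
      simp only [Finset.mem_filter, Finset.mem_univ, true_and]
      constructor
      · rw [Fin.sum_univ_castSucc
          (f := fun t : Fin (n+1) => Fin.val (if h' : (t : ℕ) < n
            then ((b ⟨(t : ℕ), h'⟩ : ℕ) : Fin (m+1)) else 0))]
        beta_reduce
        have hlastv : ¬ ((Fin.last n : ℕ) < n) := by rw [Fin.val_last]; omega
        rw [dif_neg hlastv]
        simp only [Fin.val_zero, add_zero]
        exact Eq.trans (Finset.sum_congr rfl fun t _ => hpt t) hbsum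
      · intro j
        rw [L1 _ (j : ℕ) j.isLt]
        beta_reduce
        calc m * ((j : ℕ) + 1) ≤ n * ∑ t ∈ Finset.univ.filter (fun t : Fin n => (t : ℕ) ≤ (j : ℕ)), b t := hbdyck j
          _ = _ := by rw [Finset.sum_congr rfl fun (t : Fin n) _ => (hpt t).symm]
    · intro c hc
      simp only [Finset.mem_filter, Finset.mem_univ, true_and] at hc
      funext t
      by_cases h' : (t : ℕ) < n
      · rw [dif_pos h']
        have h1 : (⟨(t : ℕ), h'⟩ : Fin n).castSucc = t := by
          apply Fin.ext; simp [Fin.coe_castSucc]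
        show (((c ((⟨(t : ℕ), h'⟩ : Fin n).castSucc) : ℕ) : Fin (m+1))) = c t
        rw [h1, Fin.cast_val_eq_self]
      · rw [dif_neg h']
        have ht : t = Fin.last n := by
          apply Fin.ext
          rw [Fin.val_last]
          have := t.isLt
          omega
        rw [ht]
        apply Fin.ext
        rw [Fin.val_zero]
        exact (L2 c hc).symm
    · intro b hb
      rw [Finset.mem_filter, hmem] at hb
      obtain ⟨hbsum, _⟩ := hb
      have hble : ∀ t : Fin n, b t ≤ m := by
        intro t
        rw [← hbsum]
        exact Finset.single_le_sum (fun i _ => Nat.zero_le _) (Finset.mem_univ t)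
      funext j'
      simp only [Fin.coe_castSucc]
      rw [dif_pos j'.isLt, Fin.val_natCast, Fin.eta]
      exact Nat.mod_eq_of_lt (by have := hble j'; omega)
    · intro c hc
      simp only [Finset.mem_filter, Finset.mem_univ, true_and] at hc
      rw [Fin.prod_univ_castSucc]
      have hlast : (c (Fin.last n) : ℕ) = 0 := L2 c hc
      rw [hlast]
      simp only [Nat.add_zero, Nat.choose_zero_right, mul_one]
      apply Finset.prod_congr rfl
      intro t _
      rw [Nat.multichoose_eq]
  rw [key, cycle_count m h (Nat.multichoose r), sum_piAntidiag_mc r Finset.univ m,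
    Finset.card_univ, Fintype.card_fin, Nat.multichoose_eq]
end
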